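/- arXiv:2210.02599 — 2 statements merged into one kernel-verified Lean document; each statement's English description precedes it below -/
import Mathlib

section
/- Let $k \geq 2$, $\phi_1, \ldots, \phi_{k-1} \in \mathbb{R}$ with $\Phi := \sum_{i=1}^{k-1} |\phi_i| < 1$, and let $F_0, F_1$ be the $(k-1)\times(k-1)$ companion-type matrices defined by: first row of $F_\delta$ equal to $(\phi_1 \delta, \phi_2, \ldots, \phi_{k-1})$, second row $(\delta, 0, \ldots, 0)$, and rows $3 \leq i \leq k-1$ having a $1$ in column $i-1$ and zeros elsewhere. Then for any $\delta_1, \ldots, \delta_{k-1} \in \{0,1\}$ and any $x \in \mathbb{R}^{k-1}$, $\|F_{\delta_{k-1}} \cdots F_{\delta_1} x\|_\infty \leq \Phi \|x\|_\infty$. -/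
/-! Each `F_δ` with `|δ| ≤ 1` maps `v` to a vector whose first coordinate is at most `Φ ‖v‖` in
absolute value and whose `i`-th coordinate, for `i ≥ 1`, is at most `|v_{i-1}|`. As `Φ ≤ 1`, the
sup norm never grows, and the bound `Φ ‖x‖` created in the first coordinate is pushed one
coordinate further at each step, so after `k - 1` steps it covers all of them. -/

/-- The companion-type matrix `F_δ` of the regime-switching representation of
the first differences of a dynamic Tobit process of order `k`. -/
def Fmat (k : ℕ) (φ : ℕ → ℝ) (δ : ℝ) : Matrix (Fin (k - 1)) (Fin (k - 1)) ℝ :=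
  fun i j =>
    if i.val = 0 then (if j.val = 0 then φ 1 * δ else φ (j.val + 1))
    else if i.val = 1 then (if j.val = 0 then δ else 0)
    else if j.val + 1 = i.val then 1 else 0

theorem abs_mulVec_apply_le {m n : Type*} [Fintype n] (A : Matrix m n ℝ) (v : n → ℝ) (i : m) :
    |A.mulVec v i| ≤ (∑ j, |A i j|) * ‖v‖ := by
  rw [Finset.sum_mul]
  refine (Finset.abs_sum_le_sum_abs _ _).trans (Finset.sum_le_sum fun j _ => ?_)
  rw [abs_mul]
  exact mul_le_mul_of_nonneg_left (norm_le_pi_norm v j) (abs_nonneg _)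

theorem sum_fin_add_one_eq_sum_Icc (n : ℕ) (f : ℕ → ℝ) :
    ∑ j : Fin n, f (j.val + 1) = ∑ i ∈ Finset.Icc 1 n, f i := by
  rw [Fin.sum_univ_eq_sum_range (fun j => f (j + 1)), Finset.range_eq_Ico, Finset.sum_Ico_add']
  rfl

section Shift

variable {n : ℕ} {Φ : ℝ} {g : ℕ → Fin n → ℝ}

theorem norm_succ_le_of_shift (hΦ : Φ ≤ 1) (s : ℕ)
    (hhead : ∀ i : Fin n, i.val = 0 → |g (s + 1) i| ≤ Φ * ‖g s‖)
    (hshift : ∀ i j : Fin n, i.val = j.val + 1 → |g (s + 1) i| ≤ |g s j|) :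
    ‖g (s + 1)‖ ≤ ‖g s‖ := by
  refine (pi_norm_le_iff_of_nonneg (norm_nonneg _)).2 fun i => ?_
  rw [Real.norm_eq_abs]
  obtain ⟨i, hi⟩ := i
  cases i with
  | zero =>
    exact (hhead _ rfl).trans (mul_le_of_le_one_left (norm_nonneg _) hΦ)
  | succ j =>
    exact (hshift _ ⟨j, by omega⟩ rfl).trans (by simpa using norm_le_pi_norm (g s) ⟨j, by omega⟩)

theorem abs_apply_le_of_shift (hΦ0 : 0 ≤ Φ) (hΦ : Φ ≤ 1)
    (hhead : ∀ s, ∀ i : Fin n, i.val = 0 → |g (s + 1) i| ≤ Φ * ‖g s‖)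
    (hshift : ∀ s, ∀ i j : Fin n, i.val = j.val + 1 → |g (s + 1) i| ≤ |g s j|) (s : ℕ) :
    ‖g s‖ ≤ ‖g 0‖ ∧ ∀ i : Fin n, i.val < s → |g s i| ≤ Φ * ‖g 0‖ := by
  induction s with
  | zero => exact ⟨le_rfl, fun i hi => absurd hi (Nat.not_lt_zero _)⟩
  | succ s ih =>
    refine ⟨(norm_succ_le_of_shift hΦ s (hhead s) (hshift s)).trans ih.1, fun i hi => ?_⟩
    obtain ⟨i, hin⟩ := i
    cases i with
    | zero => exact (hhead s _ rfl).trans (mul_le_mul_of_nonneg_left ih.1 hΦ0)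
    | succ j => exact (hshift s _ ⟨j, by omega⟩ rfl).trans (ih.2 _ (Nat.lt_of_succ_lt_succ hi))

theorem norm_le_of_shift (hΦ0 : 0 ≤ Φ) (hΦ : Φ ≤ 1)
    (hhead : ∀ s, ∀ i : Fin n, i.val = 0 → |g (s + 1) i| ≤ Φ * ‖g s‖)
    (hshift : ∀ s, ∀ i j : Fin n, i.val = j.val + 1 → |g (s + 1) i| ≤ |g s j|) :
    ‖g n‖ ≤ Φ * ‖g 0‖ :=
  (pi_norm_le_iff_of_nonneg (by positivity)).2 fun i =>
    (abs_apply_le_of_shift hΦ0 hΦ hhead hshift n).2 i i.isLt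

end Shift

section Fmat

variable {k : ℕ} {φ : ℕ → ℝ} {δ : ℝ}

theorem sum_abs_Fmat_head_le (hδ : |δ| ≤ 1) (i : Fin (k - 1)) (hi : i.val = 0) :
    ∑ j, |Fmat k φ δ i j| ≤ ∑ i ∈ Finset.Icc 1 (k - 1), |φ i| := by
  rw [← sum_fin_add_one_eq_sum_Icc]
  refine Finset.sum_le_sum fun j _ => ?_
  simp only [Fmat, hi, if_true]
  split_ifs with hj
  · rw [abs_mul, hj]
    exact mul_le_of_le_one_right (abs_nonneg _) hδ
  · exact le_rfl

theorem abs_Fmat_mulVec_head_le (hδ : |δ| ≤ 1) (v : Fin (k - 1) → ℝ) (i : Fin (k - 1))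
    (hi : i.val = 0) :
    |(Fmat k φ δ).mulVec v i| ≤ (∑ i ∈ Finset.Icc 1 (k - 1), |φ i|) * ‖v‖ :=
  (abs_mulVec_apply_le _ v i).trans
    (mul_le_mul_of_nonneg_right (sum_abs_Fmat_head_le hδ i hi) (norm_nonneg v))

theorem Fmat_mulVec_apply_of_eq_succ (v : Fin (k - 1) → ℝ) (i j : Fin (k - 1))
    (hij : i.val = j.val + 1) :
    (Fmat k φ δ).mulVec v i = if j.val = 0 then δ * v j else v j := by
  rw [Matrix.mulVec, dotProduct, Finset.sum_eq_single j]
  · split_ifs with hj <;> simp [Fmat, hij, hj]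
  · intro l _ hl
    have hlj : l.val ≠ j.val := Fin.val_ne_of_ne hl
    simp only [Fmat, hij, Nat.add_eq_zero_iff, one_ne_zero, and_false, ↓reduceIte,
      Nat.add_eq_right, Nat.add_right_cancel_iff, ite_mul, zero_mul, one_mul]
    split_ifs <;> first | rfl | omega
  · simp

theorem abs_Fmat_mulVec_apply_le_of_eq_succ (hδ : |δ| ≤ 1) (v : Fin (k - 1) → ℝ)
    (i j : Fin (k - 1)) (hij : i.val = j.val + 1) :
    |(Fmat k φ δ).mulVec v i| ≤ |v j| := by
  rw [Fmat_mulVec_apply_of_eq_succ v i j hij]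
  split_ifs
  · rw [abs_mul]
    exact mul_le_of_le_one_left (abs_nonneg _) hδ
  · exact le_rfl

end Fmat

theorem stmt_5_general (k : ℕ) (φ : ℕ → ℝ)
    (hΦ : ∑ i ∈ Finset.Icc 1 (k - 1), |φ i| < 1)
    (δ : ℕ → ℝ) (hδ : ∀ s, δ s = 0 ∨ δ s = 1)
    (x : Fin (k - 1) → ℝ) (g : ℕ → Fin (k - 1) → ℝ)
    (hg0 : g 0 = x)
    (hg : ∀ s, g (s + 1) = (Fmat k φ (δ (s + 1))).mulVec (g s)) :
    ‖g (k - 1)‖ ≤ (∑ i ∈ Finset.Icc 1 (k - 1), |φ i|) * ‖x‖ := by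
  have hδ_abs : ∀ s, |δ s| ≤ 1 := fun s => by rcases hδ s with h | h <;> simp [h]
  subst hg0
  refine norm_le_of_shift (Finset.sum_nonneg fun _ _ => abs_nonneg _) hΦ.le
    (fun s i hi => ?_) (fun s i j hij => ?_) <;> rw [hg s]
  · exact abs_Fmat_mulVec_head_le (hδ_abs _) _ i hi
  · exact abs_Fmat_mulVec_apply_le_of_eq_succ (hδ_abs _) _ i j hij

/-- Any product of `k - 1` of the matrices `F_0, F_1` contracts the supremum
norm by the factor `Φ = ∑ |φ_i| < 1`. -/
theorem stmt_5 (k : ℕ) (hk : 2 ≤ k) (φ : ℕ → ℝ)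
    (hΦ : ∑ i ∈ Finset.Icc 1 (k - 1), |φ i| < 1)
    (δ : ℕ → ℝ) (hδ : ∀ s, δ s = 0 ∨ δ s = 1)
    (x : Fin (k - 1) → ℝ) (g : ℕ → Fin (k - 1) → ℝ)
    (hg0 : g 0 = x)
    (hg : ∀ s, g (s + 1) = (Fmat k φ (δ (s + 1))).mulVec (g s)) :
    ‖g (k - 1)‖ ≤ (∑ i ∈ Finset.Icc 1 (k - 1), |φ i|) * ‖x‖ :=
  stmt_5_general k φ hΦ δ hδ x g hg0 hg
end

section
/- Let $k \geq 2$, $\phi_1, \ldots, \phi_{k-1} \in \mathbb{R}$ with $\Phi := \sum_{i=1}^{k-1} |\phi_i| < 1$, and $F_0, F_1$ the associated $(k-1) \times (k-1)$ companion-type matrices (first row of $F_\delta$: $(\phi_1\delta, \phi_2, \ldots, \phi_{k-1})$; second row: $(\delta, 0, \ldots, 0)$; rows $3, \ldots, k-1$: the shift, with $1$ in column $i-1$). Then the joint spectral radius $\lambda_{JSR}(\{F_0, F_1\}) := \limsup_{n \to \infty} \sup_{M \in \mathcal{A}^n} \lambda(M)^{1/n}$, where $\mathcal{A}^n$ is the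 set of all products of $n$ matrices taken from $\{F_0, F_1\}$ and $\lambda(M)$ is the spectral radius of $M$, satisfies $\lambda_{JSR}(\{F_0, F_1\}) \leq \Phi^{1/(k-1)} < 1$. -/
/-!
Conjugating by the diagonal matrix `D = diag(1, ρ⁻¹, …, ρ^{-(k-2)})` makes every row of
`D⁻¹ F_δ D` have absolute sum at most `ρ` as soon as `Φ ≤ ρ^(k-1)` and `ρ ≤ 1`: the first row
sums to at most `Φ ρ^{-(k-2)}`, the others hold a single entry of size at most `ρ`. So `‖·‖_∞`
after this conjugation is a submultiplicative norm in which both `F_δ` have norm at most `ρ`,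
and every product of `n` of them has spectral radius at most `ρ^n`. Letting `ρ` decrease to
`Φ^(1/(k-1))` gives the bound.
-/

open Filter

/-- The set of products of `n` matrices drawn from `{F_0, F_1}`. -/
def prodSet (k : ℕ) (φ : ℕ → ℝ) (n : ℕ) :
    Set (Matrix (Fin (k - 1)) (Fin (k - 1)) ℝ) :=
  {M | ∃ δ : Fin n → ℝ, (∀ i, δ i = 0 ∨ δ i = 1) ∧
    M = (List.ofFn (fun i => Fmat k φ (δ i))).prod}

open Topology NNReal ENNReal Matrix

theorem spectralRadius_list_prod_le {𝕜 A : Type*} [NormedField 𝕜] [NormedRing A]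
    [NormedAlgebra 𝕜 A] [CompleteSpace A] [NormOneClass A] (u : Aˣ) {L : List A} {r : ℝ≥0}
    (h : ∀ a ∈ L, ‖(↑u⁻¹ : A) * a * u‖₊ ≤ r) :
    spectralRadius 𝕜 L.prod ≤ (r : ℝ≥0∞) ^ L.length := by
  let conj : A →* A := MulDistribMulAction.toMonoidHom A (ConjAct.toConjAct u⁻¹)
  have hconj (a : A) : conj a = ↑u⁻¹ * a * u := by
    simp [conj, ConjAct.units_smul_def]
  have hnorm : ‖conj L.prod‖₊ ≤ r ^ L.length := by
    rw [map_list_prod]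
    refine (List.nnnorm_prod_le _).trans ?_
    simpa using List.prod_le_pow_card ((L.map conj).map nnnorm) r
      (by simpa [hconj] using h)
  calc spectralRadius 𝕜 L.prod = spectralRadius 𝕜 (conj L.prod) := by
        simp only [spectralRadius, hconj, spectrum.units_conjugate']
    _ ≤ ‖conj L.prod‖₊ := spectrum.spectralRadius_le_nnnorm _
    _ ≤ _ := mod_cast hnorm

section WeightedRowSums

variable {n : Type*} [Fintype n] [DecidableEq n]

noncomputable def posDiagonalUnit (w : n → ℝ) (hw : ∀ i, 0 < w i) : (Matrix n n ℂ)ˣ where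
  val := diagonal fun i => (w i : ℂ)
  inv := diagonal fun i => ((w i)⁻¹ : ℂ)
  val_inv := by simp [diagonal_mul_diagonal, (hw _).ne']
  inv_val := by simp [diagonal_mul_diagonal, (hw _).ne']

attribute [local instance] Matrix.linftyOpNormedRing Matrix.linftyOpNormedAlgebra

theorem linfty_opNNNorm_conj_posDiagonalUnit_le (M : Matrix n n ℝ) {w : n → ℝ}
    (hw : ∀ i, 0 < w i) {r : ℝ≥0} (h : ∀ i, ∑ j, |M i j| * w j ≤ r * w i) :
    ‖(↑(posDiagonalUnit w hw)⁻¹ : Matrix n n ℂ) * M.map (algebraMap ℝ ℂ) *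
      (↑(posDiagonalUnit w hw) : Matrix n n ℂ)‖₊ ≤ r := by
  rw [linfty_opNNNorm_def]
  refine Finset.sup_le fun i _ => ?_
  rw [← NNReal.coe_le_coe, NNReal.coe_sum]
  calc ∑ j, _ = (w i)⁻¹ * ∑ j, |M i j| * w j := by
        rw [Finset.mul_sum]
        refine Finset.sum_congr rfl fun j _ => ?_
        simp only [posDiagonalUnit, Units.inv_mk, Complex.coe_algebraMap, mul_diagonal,
          diagonal_mul, map_apply, nnnorm_mul, nnnorm_inv, Complex.nnnorm_real, NNReal.coe_mul,
          NNReal.coe_inv, coe_nnnorm, Real.norm_eq_abs, abs_of_pos (hw i), abs_of_pos (hw j)]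
        ring
    _ ≤ (w i)⁻¹ * (r * w i) := mul_le_mul_of_nonneg_left (h i) (inv_nonneg.2 (hw i).le)
    _ = r := by field_simp [(hw i).ne']

theorem spectralRadius_list_prod_le_of_weighted_rowSum [Nonempty n] {L : List (Matrix n n ℝ)}
    {w : n → ℝ} (hw : ∀ i, 0 < w i) {r : ℝ} (hr : 0 ≤ r)
    (h : ∀ M ∈ L, ∀ i, ∑ j, |M i j| * w j ≤ r * w i) :
    spectralRadius ℂ (L.prod.map (algebraMap ℝ ℂ)) ≤ ENNReal.ofReal r ^ L.length := by
  have hmap := map_list_prod (algebraMap ℝ ℂ).mapMatrix L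
  rw [RingHom.mapMatrix_apply] at hmap
  rw [hmap, ← L.length_map (algebraMap ℝ ℂ).mapMatrix]
  refine spectralRadius_list_prod_le (posDiagonalUnit w hw) fun A hA => ?_
  obtain ⟨M, hM, rfl⟩ := List.mem_map.1 hA
  exact linfty_opNNNorm_conj_posDiagonalUnit_le M hw fun i => by
    simpa [Real.coe_toNNReal _ hr] using h M hM i

end WeightedRowSums

theorem sum_Icc_one_eq_sum_fin {M : Type*} [AddCommMonoid M] (m : ℕ) (f : ℕ → M) :
    ∑ i ∈ Finset.Icc 1 m, f i = ∑ j : Fin m, f (j + 1) := by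
  rw [← Finset.Ico_add_one_right_eq_Icc, Finset.sum_Ico_eq_sum_range,
    Fin.sum_univ_eq_sum_range (fun j => f (j + 1))]
  simp [add_comm]

theorem abs_Fmat_zero_le {k : ℕ} (φ : ℕ → ℝ) {δ : ℝ} (hδ : |δ| ≤ 1) (h0 : 0 < k - 1)
    (j : Fin (k - 1)) : |Fmat k φ δ ⟨0, h0⟩ j| ≤ |φ (j + 1)| := by
  by_cases hj : (j : ℕ) = 0
  · simpa [Fmat, hj, abs_mul] using mul_le_of_le_one_right (abs_nonneg (φ 1)) hδ
  · simp [Fmat, hj]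

theorem sum_abs_Fmat_mul_le {k : ℕ} {φ : ℕ → ℝ} {ρ δ : ℝ} (hρ0 : 0 < ρ) (hρ1 : ρ ≤ 1)
    (hΦ : ∑ i ∈ Finset.Icc 1 (k - 1), |φ i| ≤ ρ ^ (k - 1)) (hδ : |δ| ≤ 1) (i : Fin (k - 1)) :
    ∑ j, |Fmat k φ δ i j| * ρ⁻¹ ^ (j : ℕ) ≤ ρ * ρ⁻¹ ^ (i : ℕ) := by
  obtain ⟨_ | _ | i, hi⟩ := i
  · have hk : k - 1 = (k - 2) + 1 := by omega
    calc ∑ j, |Fmat k φ δ ⟨0, hi⟩ j| * ρ⁻¹ ^ (j : ℕ)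
        ≤ ∑ j : Fin (k - 1), |φ (j + 1)| * ρ⁻¹ ^ (k - 2) :=
          Finset.sum_le_sum fun j _ => mul_le_mul (abs_Fmat_zero_le φ hδ hi j)
            (pow_le_pow_right₀ ((one_le_inv₀ hρ0).2 hρ1) (by omega)) (by positivity)
            (abs_nonneg _)
      _ ≤ ρ ^ (k - 1) * ρ⁻¹ ^ (k - 2) := by
          rw [← Finset.sum_mul, ← sum_Icc_one_eq_sum_fin (k - 1) (fun i => |φ i|)]
          gcongr
      _ = ρ * ρ⁻¹ ^ 0 := by
          rw [hk, pow_succ, inv_pow, mul_right_comm, mul_inv_cancel₀ (by positivity)]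
          simp
  · rw [Fintype.sum_eq_single ⟨0, by omega⟩ fun j hj => by
      have : (j : ℕ) ≠ 0 := fun h => hj (Fin.ext h)
      simp [Fmat, this]]
    simpa [Fmat, hρ0.ne'] using hδ
  · rw [Fintype.sum_eq_single ⟨i + 1, by omega⟩ fun j hj => by
      have : (j : ℕ) ≠ i + 1 := fun h => hj (Fin.ext h)
      simp [Fmat, this]]
    rw [pow_succ' ρ⁻¹ (i + 1), mul_inv_cancel_left₀ hρ0.ne']
    simp [Fmat]

theorem spectralRadius_le_of_mem_prodSet {k : ℕ} (hk : 2 ≤ k) {φ : ℕ → ℝ} {ρ : ℝ}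
    (hρ0 : 0 < ρ) (hρ1 : ρ ≤ 1) (hΦ : ∑ i ∈ Finset.Icc 1 (k - 1), |φ i| ≤ ρ ^ (k - 1))
    {n : ℕ} {M : Matrix (Fin (k - 1)) (Fin (k - 1)) ℝ} (hM : M ∈ prodSet k φ n) :
    spectralRadius ℂ (M.map (algebraMap ℝ ℂ)) ≤ ENNReal.ofReal ρ ^ n := by
  obtain ⟨δ, hδ, rfl⟩ := hM
  have : Nonempty (Fin (k - 1)) := ⟨⟨0, by omega⟩⟩
  simpa using spectralRadius_list_prod_le_of_weighted_rowSum
    (L := List.ofFn fun i => Fmat k φ (δ i)) (w := fun j => ρ⁻¹ ^ (j : ℕ))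
    (fun j => by positivity) hρ0.le fun F hF => by
      obtain ⟨m, rfl⟩ := List.mem_ofFn.1 hF
      exact sum_abs_Fmat_mul_le hρ0 hρ1 hΦ (by rcases hδ m with h | h <;> simp [h])

theorem limsup_jointSpectralRadius_le {k : ℕ} (hk : 2 ≤ k) {φ : ℕ → ℝ} {ρ : ℝ}
    (hρ0 : 0 < ρ) (hρ1 : ρ ≤ 1) (hΦ : ∑ i ∈ Finset.Icc 1 (k - 1), |φ i| ≤ ρ ^ (k - 1)) :
    limsup (fun n : ℕ => ⨆ M ∈ prodSet k φ n,
      (spectralRadius ℂ (M.map (algebraMap ℝ ℂ))) ^ ((1 : ℝ) / n)) atTop ≤ ENNReal.ofReal ρ := by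
  refine limsup_le_of_le (by isBoundedDefault) ?_
  filter_upwards [eventually_ne_atTop 0] with n hn
  refine iSup₂_le fun M hM => ?_
  calc spectralRadius ℂ (M.map (algebraMap ℝ ℂ)) ^ ((1 : ℝ) / n)
      ≤ (ENNReal.ofReal ρ ^ n) ^ ((n : ℝ)⁻¹) := by
        rw [one_div]
        gcongr
        exact spectralRadius_le_of_mem_prodSet hk hρ0 hρ1 hΦ hM
    _ = ENNReal.ofReal ρ := ENNReal.pow_rpow_inv_natCast hn _

/-- If `Φ = ∑ |φ_i| < 1`, then the joint spectral radius of `{F_0, F_1}`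
is at most `Φ^(1/(k-1)) < 1`. -/
theorem stmt_7 (k : ℕ) (hk : 2 ≤ k) (φ : ℕ → ℝ)
    (hΦ : ∑ i ∈ Finset.Icc 1 (k - 1), |φ i| < 1) :
    Filter.limsup
        (fun n : ℕ =>
          ⨆ M ∈ prodSet k φ n,
            (spectralRadius ℂ (M.map (algebraMap ℝ ℂ))) ^ ((1 : ℝ) / n))
        Filter.atTop ≤
      ENNReal.ofReal
        ((∑ i ∈ Finset.Icc 1 (k - 1), |φ i|) ^ ((1 : ℝ) / ((k : ℝ) - 1)))
      ∧ (∑ i ∈ Finset.Icc 1 (k - 1), |φ i|) ^ ((1 : ℝ) / ((k : ℝ) - 1)) < 1 := by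
  set Φ := ∑ i ∈ Finset.Icc 1 (k - 1), |φ i|
  set ρ₀ := Φ ^ ((1 : ℝ) / ((k : ℝ) - 1)) with hρ₀
  have hΦ0 : 0 ≤ Φ := Finset.sum_nonneg fun i _ => abs_nonneg _
  have hexp : (1 : ℝ) / ((k : ℝ) - 1) = ((k - 1 : ℕ) : ℝ)⁻¹ := by
    rw [one_div, Nat.cast_sub (by omega), Nat.cast_one]
  have hρ₀_nonneg : 0 ≤ ρ₀ := Real.rpow_nonneg hΦ0 _
  have hρ₀_pow : ρ₀ ^ (k - 1) = Φ := by
    rw [hρ₀, hexp, Real.rpow_inv_natCast_pow hΦ0 (by omega)]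
  have hρ₀_lt : ρ₀ < 1 :=
    Real.rpow_lt_one hΦ0 hΦ (by rw [hexp]; exact inv_pos.2 (mod_cast (by omega : 0 < k - 1)))
  refine ⟨?_, hρ₀_lt⟩
  have hlim : Tendsto ENNReal.ofReal (𝓝[>] ρ₀) (𝓝 (ENNReal.ofReal ρ₀)) :=
    (ENNReal.continuous_ofReal.tendsto ρ₀).mono_left nhdsWithin_le_nhds
  refine ge_of_tendsto hlim ?_
  filter_upwards [Ioo_mem_nhdsGT hρ₀_lt] with ρ ⟨hρ_gt, hρ_lt⟩
  refine limsup_jointSpectralRadius_le hk (hρ₀_nonneg.trans_lt hρ_gt) hρ_lt.le ?_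
  exact hρ₀_pow.symm.le.trans (pow_le_pow_left₀ hρ₀_nonneg hρ_gt.le _)
end
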